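/- Let n ≥ 1 and let W : ℝⁿ → ℝ be C² such that ∇W(u + c·𝟙) = ∇W(u) for all u ∈ ℝⁿ, c ∈ ℝ, and ⟨Hess W(u)·w, w⟩ > 0 for every u ∈ ℝⁿ and every nonzero w ∈ ℝⁿ with ⟨w,𝟙⟩ = 0. Let K* ∈ ℝⁿ and suppose there exists u* ∈ Σ₀ with ∇W(u*) = K*. Then every differentiable curve u : [0,∞) → ℝⁿ satisfying u′(t) = -Hess W(u(t))·(∇W(u(t)) - K*) for all t ≥ 0 with u(0) ∈ Σ₀ converges exponentially fast to u*: there exist constants C > 0 and λ > 0 such that ‖u(t) - u*‖ ≤ C·e^{-λ t} for all t ≥ 0. -/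

import Mathlib

open scoped RealInnerProductSpace

/-- The all-ones vector `𝟙 = (1, …, 1)` in Euclidean `n`-space. -/
def allOnes (n : ℕ) : EuclideanSpace ℝ (Fin n) := WithLp.toLp 2 (fun _ => (1 : ℝ))

section realaux

/-- A function with vanishing derivative on `[0, ∞)` is constant there. -/
lemma const_of_derivIci {f : ℝ → ℝ} (hf : ∀ t ∈ Set.Ici (0:ℝ), HasDerivAt f 0 t) :
    ∀ t ∈ Set.Ici (0:ℝ), f t = f 0 := by
  have hc : ContinuousOn f (Set.Ici 0) := fun t ht => ((hf t ht).continuousAt).continuousWithinAt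
  have hd : ∀ t ∈ interior (Set.Ici (0:ℝ)), DifferentiableAt ℝ f t := fun t ht =>
    (hf t (interior_subset ht)).differentiableAt
  have hder : ∀ t ∈ interior (Set.Ici (0:ℝ)), deriv f t = 0 := fun t ht =>
    (hf t (interior_subset ht)).deriv
  have hmono := monotoneOn_of_deriv_nonneg (convex_Ici 0) hc
    (fun t ht => (hd t ht).differentiableWithinAt) (fun t ht => (hder t ht).ge)
  have hanti := antitoneOn_of_deriv_nonpos (convex_Ici 0) hc
    (fun t ht => (hd t ht).differentiableWithinAt) (fun t ht => (hder t ht).le)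
  intro t ht
  exact le_antisymm (hanti (Set.self_mem_Ici) ht ht) (hmono (Set.self_mem_Ici) ht ht)

/-- Nonpositive derivative on `[0, ∞)` gives monotone decay. -/
lemma antitone_of_derivIci {f : ℝ → ℝ} {f' : ℝ → ℝ}
    (hf : ∀ t ∈ Set.Ici (0:ℝ), HasDerivAt f (f' t) t)
    (hf' : ∀ t ∈ Set.Ici (0:ℝ), f' t ≤ 0) :
    ∀ t ∈ Set.Ici (0:ℝ), f t ≤ f 0 := by
  have hc : ContinuousOn f (Set.Ici 0) := fun t ht => ((hf t ht).continuousAt).continuousWithinAt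
  have hanti := antitoneOn_of_deriv_nonpos (convex_Ici 0) hc
    (fun t ht => (hf t (interior_subset ht)).differentiableAt.differentiableWithinAt)
    (fun t ht => by rw [(hf t (interior_subset ht)).deriv]; exact hf' t (interior_subset ht))
  exact fun t ht => hanti Set.self_mem_Ici ht ht

/-- A Grönwall-type exponential decay lemma. -/
lemma gronwall_decay {f : ℝ → ℝ} {f' : ℝ → ℝ} {mu : ℝ}
    (hf : ∀ t ∈ Set.Ici (0:ℝ), HasDerivAt f (f' t) t)
    (hb : ∀ t ∈ Set.Ici (0:ℝ), f' t ≤ -mu * f t) :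
    ∀ t ∈ Set.Ici (0:ℝ), f t ≤ f 0 * Real.exp (-mu * t) := by
  set g : ℝ → ℝ := fun t => f t * Real.exp (mu * t) with hg
  have hgd : ∀ t ∈ Set.Ici (0:ℝ),
      HasDerivAt g (f' t * Real.exp (mu * t) + f t * (mu * Real.exp (mu * t))) t := by
    intro t ht
    exact (hf t ht).mul ((Real.hasDerivAt_exp (mu * t)).comp t
      (by simpa using (hasDerivAt_id t).const_mul mu) |>.congr_deriv (by ring))
  have hgd' : ∀ t ∈ Set.Ici (0:ℝ),
      f' t * Real.exp (mu * t) + f t * (mu * Real.exp (mu * t)) ≤ 0 := by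
    intro t ht
    have h1 := hb t ht
    nlinarith [Real.exp_pos (mu * t)]
  have hA := antitone_of_derivIci hgd hgd'
  intro t ht
  have h2 := hA t ht
  have h3 : g 0 = f 0 := by simp [hg]
  rw [h3] at h2
  have h4 : f t = g t * Real.exp (-mu * t) := by
    rw [hg]; simp only []
    rw [mul_assoc, ← Real.exp_add]
    ring_nf
    simp
  rw [h4, neg_mul]
  exact mul_le_mul_of_nonneg_right h2 (Real.exp_pos _).le

/-- Lower bound on increment from a lower bound on the derivative on `[0,1]`. -/
lemma incr_ge_of_deriv_ge {f : ℝ → ℝ} {f' : ℝ → ℝ} {c : ℝ}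
    (hf : ∀ s ∈ Set.Icc (0:ℝ) 1, HasDerivAt f (f' s) s)
    (hge : ∀ s ∈ Set.Icc (0:ℝ) 1, c ≤ f' s) :
    f 0 + c ≤ f 1 := by
  set g : ℝ → ℝ := fun s => f s - c * s with hg
  have hc : ContinuousOn g (Set.Icc 0 1) := fun s hs =>
    (((hf s hs).sub ((hasDerivAt_id s).const_mul c)).continuousAt).continuousWithinAt
  have hmono := monotoneOn_of_deriv_nonneg (convex_Icc 0 1) hc
    (fun s hs => by
      have hs' : s ∈ Set.Icc (0:ℝ) 1 := interior_subset hs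
      exact (((hf s hs').sub (by simpa using (hasDerivAt_id s).const_mul c))).differentiableAt.differentiableWithinAt)
    (fun s hs => by
      have hs' : s ∈ Set.Icc (0:ℝ) 1 := interior_subset hs
      have : HasDerivAt g (f' s - c) s := by
        exact ((hf s hs').sub ((hasDerivAt_id s).const_mul c)).congr_deriv (by ring)
      rw [this.deriv]
      have := hge s hs'
      linarith)
  have := hmono (Set.mem_Icc.mpr ⟨le_rfl, zero_le_one⟩) (Set.mem_Icc.mpr ⟨zero_le_one, le_rfl⟩)
    zero_le_one
  simp only [hg] at this
  linarith [this]

end realaux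

section core
variable {n : ℕ} {W : EuclideanSpace ℝ (Fin n) → ℝ}

lemma grad_contDiff_one' (hW : ContDiff ℝ 2 W) : ContDiff ℝ 1 (gradient W) := by
  have h1 : ContDiff ℝ 1 (fderiv ℝ W) := hW.fderiv_right (by norm_num)
  have : gradient W = fun x => (InnerProductSpace.toDual ℝ _).symm (fderiv ℝ W x) := rfl
  rw [this]
  exact (InnerProductSpace.toDual ℝ _).symm.toContinuousLinearEquiv.contDiff.comp h1

lemma hess_one_zero (hW : ContDiff ℝ 2 W)
    (hinv : ∀ (u : EuclideanSpace ℝ (Fin n)) (c : ℝ),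
      gradient W (u + c • allOnes n) = gradient W u)
    (x : EuclideanSpace ℝ (Fin n)) :
    fderiv ℝ (gradient W) x (allOnes n) = 0 := by
  have hG := grad_contDiff_one' hW
  have hGd : HasFDerivAt (gradient W) (fderiv ℝ (gradient W) x) x :=
    (hG.differentiable one_ne_zero x).hasFDerivAt
  have hline : HasDerivAt (fun c : ℝ => x + c • allOnes n) (allOnes n) 0 := by
    simpa using ((hasDerivAt_id (0:ℝ)).smul_const (allOnes n)).const_add x
  have hcomp : HasDerivAt (fun c : ℝ => gradient W (x + c • allOnes n))
      (fderiv ℝ (gradient W) x (allOnes n)) 0 := by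
    have h0 : x + (0:ℝ) • allOnes n = x := by simp
    have hGd' : HasFDerivAt (gradient W) (fderiv ℝ (gradient W) x) (x + (0:ℝ) • allOnes n) := by
      rw [h0]; exact hGd
    exact hGd'.comp_hasDerivAt 0 hline
  have hconst : HasDerivAt (fun c : ℝ => gradient W (x + c • allOnes n)) 0 0 := by
    have : (fun c : ℝ => gradient W (x + c • allOnes n)) = fun _ => gradient W x := by
      funext c; exact hinv x c
    rw [this]; exact hasDerivAt_const 0 _
  exact hcomp.unique hconst

lemma hess_symm' (hW : ContDiff ℝ 2 W) (x v w : EuclideanSpace ℝ (Fin n)) :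
    ⟪fderiv ℝ (gradient W) x v, w⟫ = ⟪fderiv ℝ (gradient W) x w, v⟫ := by
  have key : ∀ z u : EuclideanSpace ℝ (Fin n),
      ⟪fderiv ℝ (gradient W) x z, u⟫ = fderiv ℝ (fderiv ℝ W) x z u := by
    intro z u
    have hfd : gradient W = (InnerProductSpace.toDual ℝ _).symm ∘ fderiv ℝ W := rfl
    rw [hfd, LinearIsometryEquiv.comp_fderiv]
    simp only [ContinuousLinearMap.coe_comp', Function.comp_apply, LinearIsometryEquiv.coe_coe]
    exact InnerProductSpace.toDual_symm_apply
  have hsym : IsSymmSndFDerivAt ℝ W x := hW.contDiffAt.isSymmSndFDerivAt (by norm_num)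
  rw [key, key, hsym.eq]

lemma grad_inner_one_const (hW : ContDiff ℝ 2 W)
    (hinv : ∀ (u : EuclideanSpace ℝ (Fin n)) (c : ℝ),
      gradient W (u + c • allOnes n) = gradient W u)
    (x y : EuclideanSpace ℝ (Fin n)) :
    ⟪gradient W x, allOnes n⟫ = ⟪gradient W y, allOnes n⟫ := by
  have hG := grad_contDiff_one' hW
  set g : EuclideanSpace ℝ (Fin n) → ℝ := fun z => ⟪allOnes n, gradient W z⟫ with hg
  have hfd : ∀ z, HasFDerivAt g
      ((innerSL ℝ (allOnes n)).comp (fderiv ℝ (gradient W) z)) z := fun z =>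
    ((innerSL ℝ (allOnes n)).hasFDerivAt).comp z (hG.differentiable one_ne_zero z).hasFDerivAt
  have hzero : ∀ z, fderiv ℝ g z = 0 := by
    intro z
    rw [(hfd z).fderiv]
    ext v
    simp only [ContinuousLinearMap.coe_comp', Function.comp_apply, innerSL_apply_apply,
      ContinuousLinearMap.zero_apply]
    rw [real_inner_comm, hess_symm' hW, hess_one_zero hW hinv, inner_zero_left]
  have hconst := is_const_of_fderiv_eq_zero (𝕜 := ℝ)
    (fun z => (hfd z).differentiableAt) hzero x y
  simp only [hg] at hconst
  rw [real_inner_comm, hconst, real_inner_comm]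

lemma line_hasDerivAt (x v : EuclideanSpace ℝ (Fin n)) (s : ℝ) :
    HasDerivAt (fun s : ℝ => x + s • v) v s := by
  simpa using ((hasDerivAt_id s).smul_const v).const_add x

lemma psi_hasDerivAt (hW : ContDiff ℝ 2 W) (x v : EuclideanSpace ℝ (Fin n)) (s : ℝ) :
    HasDerivAt (fun s : ℝ => (⟪gradient W (x + s • v), v⟫ : ℝ))
      ⟪fderiv ℝ (gradient W) (x + s • v) v, v⟫ s := by
  have hG := grad_contDiff_one' hW
  have hGc : HasDerivAt (fun s : ℝ => gradient W (x + s • v))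
      (fderiv ℝ (gradient W) (x + s • v) v) s :=
    ((hG.differentiable one_ne_zero _).hasFDerivAt).comp_hasDerivAt s (line_hasDerivAt x v s)
  simpa using hGc.inner ℝ (hasDerivAt_const s v)

lemma grad_incr_ge (hW : ContDiff ℝ 2 W) (x v : EuclideanSpace ℝ (Fin n)) (c : ℝ)
    (hc : ∀ s ∈ Set.Icc (0:ℝ) 1, c ≤ ⟪fderiv ℝ (gradient W) (x + s • v) v, v⟫) :
    c ≤ ⟪gradient W (x + v) - gradient W x, v⟫ := by
  have := incr_ge_of_deriv_ge (fun s _ => psi_hasDerivAt hW x v s) hc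
  simp only [zero_smul, add_zero, one_smul] at this
  rw [inner_sub_left]
  linarith

lemma grad_strict_mono (hW : ContDiff ℝ 2 W)
    (hpos : ∀ u w : EuclideanSpace ℝ (Fin n), w ≠ 0 → ⟪w, allOnes n⟫ = 0 →
      0 < ⟪(fderiv ℝ (gradient W) u) w, w⟫)
    (x v : EuclideanSpace ℝ (Fin n)) (hv : v ≠ 0) (hv1 : ⟪v, allOnes n⟫ = 0) :
    0 < ⟪gradient W (x + v) - gradient W x, v⟫ := by
  have hs : StrictMono (fun s : ℝ => (⟪gradient W (x + s • v), v⟫ : ℝ)) := by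
    apply strictMono_of_deriv_pos
    intro s
    rw [(psi_hasDerivAt hW x v s).deriv]
    exact hpos _ v hv hv1
  have := hs (show (0:ℝ) < 1 by norm_num)
  simp only [zero_smul, add_zero, one_smul] at this
  rw [inner_sub_left]
  linarith

lemma grad_mono (hW : ContDiff ℝ 2 W)
    (hpos : ∀ u w : EuclideanSpace ℝ (Fin n), w ≠ 0 → ⟪w, allOnes n⟫ = 0 →
      0 < ⟪(fderiv ℝ (gradient W) u) w, w⟫)
    (x v : EuclideanSpace ℝ (Fin n)) (hv1 : ⟪v, allOnes n⟫ = 0) :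
    0 ≤ ⟪gradient W (x + v) - gradient W x, v⟫ := by
  rcases eq_or_ne v 0 with rfl | hv
  · simp
  · exact (grad_strict_mono hW hpos x v hv hv1).le

lemma conv_ineq (hW : ContDiff ℝ 2 W)
    (hpos : ∀ u w : EuclideanSpace ℝ (Fin n), w ≠ 0 → ⟪w, allOnes n⟫ = 0 →
      0 < ⟪(fderiv ℝ (gradient W) u) w, w⟫)
    (x v : EuclideanSpace ℝ (Fin n)) (hv1 : ⟪v, allOnes n⟫ = 0) :
    W x + ⟪gradient W x, v⟫ ≤ W (x + v) := by
  have hWd : ∀ z, HasFDerivAt W (fderiv ℝ W z) z := fun z =>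
    (hW.differentiable (by norm_num) z).hasFDerivAt
  have hf : ∀ s ∈ Set.Icc (0:ℝ) 1,
      HasDerivAt (fun s : ℝ => W (x + s • v)) ⟪gradient W (x + s • v), v⟫ s := by
    intro s _
    have := (hWd (x + s • v)).comp_hasDerivAt s (line_hasDerivAt x v s)
    have heq : (⟪gradient W (x + s • v), v⟫ : ℝ) = fderiv ℝ W (x + s • v) v := by
      rw [gradient]; exact InnerProductSpace.toDual_symm_apply
    rw [heq]
    exact this
  have hge : ∀ s ∈ Set.Icc (0:ℝ) 1, (⟪gradient W x, v⟫ : ℝ) ≤ ⟪gradient W (x + s • v), v⟫ := by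
    intro s hs
    rcases eq_or_lt_of_le hs.1 with rfl | hs0
    · simp
    · have := grad_mono hW hpos x (s • v) (by rw [real_inner_smul_left, hv1, mul_zero])
      rw [real_inner_smul_right] at this
      have h2 : 0 ≤ ⟪gradient W (x + s • v) - gradient W x, v⟫ :=
        nonneg_of_mul_nonneg_right this hs0
      rw [inner_sub_left] at h2
      linarith
  have := incr_ge_of_deriv_ge hf hge
  simpa using this

end core

set_option maxHeartbeats 1000000 in
/-- Let `W` be C² with `∇W` invariant under translations by multiples of `𝟙`
and with `⟨Hess W(u) w, w⟩ > 0` for all `u` and all nonzero `w ⊥ 𝟙`.  If `u* ∈ Σ₀`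
satisfies `∇W(u*) = K*`, then every solution `u : [0, ∞) → ℝⁿ` of the combinatorial
Calabi flow `u' = -Hess W(u)(∇W(u) - K*)` with `u(0) ∈ Σ₀` converges exponentially fast
to `u*`. -/
theorem stmt_10 (n : ℕ) (hn : 1 ≤ n)
    (W : EuclideanSpace ℝ (Fin n) → ℝ)
    (hW : ContDiff ℝ 2 W)
    (hinv : ∀ (u : EuclideanSpace ℝ (Fin n)) (c : ℝ),
      gradient W (u + c • allOnes n) = gradient W u)
    (hpos : ∀ u w : EuclideanSpace ℝ (Fin n), w ≠ 0 → ⟪w, allOnes n⟫ = 0 →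
      0 < ⟪(fderiv ℝ (gradient W) u) w, w⟫)
    (Kstar ustar : EuclideanSpace ℝ (Fin n))
    (hustar0 : ⟪ustar, allOnes n⟫ = 0)
    (hcrit : gradient W ustar = Kstar)
    (u : ℝ → EuclideanSpace ℝ (Fin n))
    (hu : ∀ t : ℝ, 0 ≤ t → HasDerivAt u
      (-(fderiv ℝ (gradient W) (u t)) (gradient W (u t) - Kstar)) t)
    (hu0 : ⟪u 0, allOnes n⟫ = 0) :
    ∃ C > (0 : ℝ), ∃ lam > (0 : ℝ), ∀ t : ℝ, 0 ≤ t →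
      ‖u t - ustar‖ ≤ C * Real.exp (-lam * t) := by
  have hG := grad_contDiff_one' hW
  have hHcont : Continuous (fun x => fderiv ℝ (gradient W) x) := hG.continuous_fderiv one_ne_zero
  -- h is orthogonal to 𝟙
  have horth : ∀ x, ⟪gradient W x - Kstar, allOnes n⟫ = 0 := by
    intro x
    rw [inner_sub_left, grad_inner_one_const hW hinv x ustar, hcrit, sub_self]
  have hHorth : ∀ x w, ⟪fderiv ℝ (gradient W) x w, allOnes n⟫ = 0 := by
    intro x w
    rw [hess_symm' hW, hess_one_zero hW hinv, inner_zero_left]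
  -- the flow stays in Σ₀
  have hflow : ∀ t ∈ Set.Ici (0:ℝ), ⟪u t, allOnes n⟫ = 0 := by
    have hp : ∀ t ∈ Set.Ici (0:ℝ),
        HasDerivAt (fun t => (⟪u t, allOnes n⟫ : ℝ)) 0 t := by
      intro t ht
      have h1 := (hu t ht).inner ℝ (hasDerivAt_const t (allOnes n))
      have h0 : (⟪u t, (0 : EuclideanSpace ℝ (Fin n))⟫
          + ⟪-(fderiv ℝ (gradient W) (u t)) (gradient W (u t) - Kstar), allOnes n⟫ : ℝ) = 0 := by
        rw [inner_zero_right, inner_neg_left, hHorth]; ring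
      rw [h0] at h1
      exact h1
    intro t ht
    rw [const_of_derivIci hp t ht, hu0]
  -- the solutions in Σ₀: differences are orthogonal to 𝟙
  have hdifforth : ∀ t ∈ Set.Ici (0:ℝ), ⟪u t - ustar, allOnes n⟫ = 0 := by
    intro t ht
    rw [inner_sub_left, hflow t ht, hustar0, sub_self]
  by_cases hS : ∃ d : EuclideanSpace ℝ (Fin n), ‖d‖ = 1 ∧ ⟪d, allOnes n⟫ = 0
  case neg =>
    -- Σ₀ is trivial
    refine ⟨1, one_pos, 1, one_pos, fun t ht => ?_⟩
    have hz : u t - ustar = 0 := by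
      by_contra hne
      exact hS ⟨‖u t - ustar‖⁻¹ • (u t - ustar), by
        rw [norm_smul, norm_inv, norm_norm]
        exact inv_mul_cancel₀ (norm_ne_zero_iff.mpr hne), by
        rw [real_inner_smul_left, hdifforth t ht, mul_zero]⟩
    rw [hz, norm_zero]
    positivity
  case pos =>
    obtain ⟨d1, hd1norm, hd1orth⟩ := hS
    have hW1 : ∀ z, HasFDerivAt W (fderiv ℝ W z) z := fun z =>
      (hW.differentiable (by norm_num) z).hasFDerivAt
    have hginner : ∀ z v : EuclideanSpace ℝ (Fin n),
        (⟪gradient W z, v⟫ : ℝ) = fderiv ℝ W z v := by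
      intro z v; rw [gradient]; exact InnerProductSpace.toDual_symm_apply
    -- the Lyapunov function W - ⟪K*, ·⟫ decreases along the flow
    have hLyap : ∀ t ∈ Set.Ici (0:ℝ),
        W (u t) - ⟪Kstar, u t⟫ ≤ W (u 0) - ⟪Kstar, u 0⟫ := by
      apply antitone_of_derivIci (f' := fun t =>
        (⟪gradient W (u t) - Kstar,
          -(fderiv ℝ (gradient W) (u t)) (gradient W (u t) - Kstar)⟫ : ℝ))
      · intro t ht
        have hWc : HasDerivAt (fun t => W (u t))
            (⟪gradient W (u t),
              -(fderiv ℝ (gradient W) (u t)) (gradient W (u t) - Kstar)⟫) t := by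
          rw [hginner]
          exact (hW1 (u t)).comp_hasDerivAt t (hu t ht)
        have hKc : HasDerivAt (fun t => (⟪Kstar, u t⟫ : ℝ))
            (⟪Kstar, -(fderiv ℝ (gradient W) (u t)) (gradient W (u t) - Kstar)⟫) t := by
          have := (hasDerivAt_const t Kstar).inner ℝ (hu t ht)
          simpa using this
        have := hWc.sub hKc
        rw [← inner_sub_left] at this
        exact this
      · intro t ht
        rw [inner_neg_right]
        have : (0:ℝ) ≤ ⟪(fderiv ℝ (gradient W) (u t)) (gradient W (u t) - Kstar),
            gradient W (u t) - Kstar⟫ := by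
          rcases eq_or_ne (gradient W (u t) - Kstar) 0 with hz | hz
          · rw [hz]; simp
          · exact (hpos _ _ hz (horth _)).le
        rw [real_inner_comm] at this
        linarith
    -- the unit sphere of Σ₀ is compact
    set S1 : Set (EuclideanSpace ℝ (Fin n)) :=
      {d | ‖d‖ = 1 ∧ ⟪d, allOnes n⟫ = 0} with hS1def
    have hS1c : IsCompact S1 := by
      have heq : S1 = Metric.sphere 0 1 ∩ {d | ⟪d, allOnes n⟫ = 0} := by
        ext d; simp [hS1def, mem_sphere_zero_iff_norm]
      rw [heq]
      exact (isCompact_sphere (0 : EuclideanSpace ℝ (Fin n)) 1).inter_right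
        (isClosed_eq (continuous_id.inner continuous_const) continuous_const)
    have hd1S : d1 ∈ S1 := ⟨hd1norm, hd1orth⟩
    -- minimum of the normalized gradient increment on S1
    have hfc : Continuous (fun d : EuclideanSpace ℝ (Fin n) =>
        (⟪gradient W (ustar + d) - Kstar, d⟫ : ℝ)) :=
      (((grad_contDiff_one' hW).continuous.comp (continuous_const.add continuous_id)).sub
        continuous_const).inner continuous_id
    obtain ⟨d₀, hd₀S, hd₀min⟩ := hS1c.exists_isMinOn ⟨d1, hd1S⟩ hfc.continuousOn
    have hd₀n : ‖d₀‖ = 1 := hd₀S.1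
    have hd₀o : ⟪d₀, allOnes n⟫ = 0 := hd₀S.2
    have hd₀ne : d₀ ≠ 0 := by intro h0; rw [h0, norm_zero] at hd₀n; exact one_ne_zero hd₀n.symm
    set eps : ℝ := ⟪gradient W (ustar + d₀) - Kstar, d₀⟫ with hepsdef
    have heps : 0 < eps := by
      have := grad_strict_mono hW hpos ustar d₀ hd₀ne hd₀o
      rw [hcrit] at this
      exact this
    have hminf : ∀ d ∈ S1, eps ≤ ⟪gradient W (ustar + d) - Kstar, d⟫ := fun d hd =>
      isMinOn_iff.mp hd₀min d hd
    -- translated convexity inequality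
    have hconvWt : ∀ x v : EuclideanSpace ℝ (Fin n), ⟪v, allOnes n⟫ = 0 →
        (W x - ⟪Kstar, x⟫) + ⟪gradient W x - Kstar, v⟫ ≤ W (x + v) - ⟪Kstar, x + v⟫ := by
      intro x v hv
      have h1 := conv_ineq hW hpos x v hv
      rw [inner_sub_left]
      rw [inner_add_right]
      linarith
    -- u* is the global minimum on Σ₀
    have humin : W ustar - ⟪Kstar, ustar⟫ ≤ W (u 0) - ⟪Kstar, u 0⟫ := by
      have h1 := hconvWt ustar (u 0 - ustar)
        (by rw [inner_sub_left, hu0, hustar0, sub_self])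
      rw [hcrit, sub_self, inner_zero_left, add_zero, add_sub_cancel] at h1
      exact h1
    -- radius bound for the trajectory
    set B : ℝ := W (u 0) - ⟪Kstar, u 0⟫ with hBdef
    set R : ℝ := 1 + (B - (W ustar - ⟪Kstar, ustar⟫)) / eps with hRdef
    have hR1 : 1 ≤ R := by
      rw [hRdef]
      have : 0 ≤ (B - (W ustar - ⟪Kstar, ustar⟫)) / eps :=
        div_nonneg (by rw [hBdef]; linarith) heps.le
      linarith
    have hRad : ∀ t ∈ Set.Ici (0:ℝ), ‖u t - ustar‖ ≤ R := by
      intro t ht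
      by_cases hle : ‖u t - ustar‖ ≤ 1
      · linarith
      push_neg at hle
      have hr0 : (0:ℝ) < ‖u t - ustar‖ := by linarith
      set w : EuclideanSpace ℝ (Fin n) := u t - ustar with hwdef
      set r : ℝ := ‖w‖ with hrdef
      set d : EuclideanSpace ℝ (Fin n) := r⁻¹ • w with hddef
      have hworth : ⟪w, allOnes n⟫ = 0 := hdifforth t ht
      have hdS : d ∈ S1 := by
        constructor
        · rw [hddef, norm_smul, norm_inv, norm_norm, ← hrdef]
          exact inv_mul_cancel₀ (by positivity)
        · rw [hddef, real_inner_smul_left, hworth, mul_zero]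
      have hwd : w = r • d := by
        rw [hddef, smul_smul, mul_inv_cancel₀ (by positivity), one_smul]
      -- first application: Wt(u* + d) ≥ Wt(u*)
      have h1 := hconvWt ustar d hdS.2
      rw [hcrit, sub_self, inner_zero_left, add_zero] at h1
      -- second application at u* + d with increment (1 - r⁻¹) • w
      have h2 := hconvWt (ustar + d) ((1 - r⁻¹) • w)
        (by rw [real_inner_smul_left, hworth, mul_zero])
      have hpt : ustar + d + (1 - r⁻¹) • w = u t := by
        rw [sub_smul, one_smul, hddef, hwdef]
        abel
      rw [hpt] at h2
      have hinner2 : (r - 1) * eps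
          ≤ (⟪gradient W (ustar + d) - Kstar, (1 - r⁻¹) • w⟫ : ℝ) := by
        rw [real_inner_smul_right, hwd, real_inner_smul_right]
        have hfd : eps ≤ ⟪gradient W (ustar + d) - Kstar, d⟫ := hminf d hdS
        have hr1 : (0:ℝ) ≤ 1 - r⁻¹ := by
          rw [sub_nonneg]
          exact inv_le_one_of_one_le₀ hle.le
        have hexp : (1 - r⁻¹) * r = r - 1 := by
          field_simp
        nlinarith [mul_le_mul_of_nonneg_left hfd (mul_nonneg hr1 (by positivity : (0:ℝ) ≤ r))]
      have hLt := hLyap t ht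
      -- combine
      have hcomb : W ustar - ⟪Kstar, ustar⟫ + (r - 1) * eps ≤ B := by
        rw [hBdef]
        calc W ustar - ⟪Kstar, ustar⟫ + (r - 1) * eps
            ≤ (W (ustar + d) - ⟪Kstar, ustar + d⟫) + (r - 1) * eps := by linarith
          _ ≤ (W (ustar + d) - ⟪Kstar, ustar + d⟫)
              + ⟪gradient W (ustar + d) - Kstar, (1 - r⁻¹) • w⟫ := by linarith
          _ ≤ W (u t) - ⟪Kstar, u t⟫ := by linarith
          _ ≤ W (u 0) - ⟪Kstar, u 0⟫ := hLt
      have : r - 1 ≤ (B - (W ustar - ⟪Kstar, ustar⟫)) / eps := by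
        rw [le_div_iff₀ heps]
        linarith
      rw [hrdef, hwdef] at this ⊢
      rw [hRdef]
      linarith
    -- minimum Hessian eigenvalue on the ball
    have hRpos : (0:ℝ) < R := lt_of_lt_of_le one_pos hR1
    have hKc : IsCompact (Metric.closedBall ustar R ×ˢ S1) :=
      (isCompact_closedBall ustar R).prod hS1c
    have hqc : Continuous (fun p : EuclideanSpace ℝ (Fin n) × EuclideanSpace ℝ (Fin n) =>
        (⟪fderiv ℝ (gradient W) p.1 p.2, p.2⟫ : ℝ)) :=
      ((hHcont.comp continuous_fst).clm_apply continuous_snd).inner continuous_snd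
    have hne : ((ustar, d1) : EuclideanSpace ℝ (Fin n) × EuclideanSpace ℝ (Fin n))
        ∈ Metric.closedBall ustar R ×ˢ S1 := by
      constructor
      · simp [Metric.mem_closedBall, hRpos.le]
      · exact hd1S
    obtain ⟨⟨x₀, w₀⟩, hp₀, hqmin⟩ := hKc.exists_isMinOn ⟨(ustar, d1), hne⟩ hqc.continuousOn
    set lam : ℝ := ⟪fderiv ℝ (gradient W) x₀ w₀, w₀⟫ with hlamdef
    have hw₀S : w₀ ∈ S1 := hp₀.2
    have hw₀n : ‖w₀‖ = 1 := hw₀S.1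
    have hw₀ne : w₀ ≠ 0 := by
      intro h0; rw [h0, norm_zero] at hw₀n; exact one_ne_zero hw₀n.symm
    have hlam : 0 < lam := hpos x₀ w₀ hw₀ne hw₀S.2
    have hlam2 : ∀ x ∈ Metric.closedBall ustar R, ∀ v : EuclideanSpace ℝ (Fin n),
        ⟪v, allOnes n⟫ = 0 → lam * ‖v‖ ^ 2 ≤ ⟪fderiv ℝ (gradient W) x v, v⟫ := by
      intro x hx v hv
      rcases eq_or_ne v 0 with rfl | hvne
      · simp
      have hnv : (0:ℝ) < ‖v‖ := norm_pos_iff.mpr hvne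
      set dv : EuclideanSpace ℝ (Fin n) := ‖v‖⁻¹ • v with hdvdef
      have hdvS : dv ∈ S1 := by
        constructor
        · rw [hdvdef, norm_smul, norm_inv, norm_norm]
          exact inv_mul_cancel₀ hnv.ne'
        · rw [hdvdef, real_inner_smul_left, hv, mul_zero]
      have hmem : ((x, dv) : EuclideanSpace ℝ (Fin n) × EuclideanSpace ℝ (Fin n))
          ∈ Metric.closedBall ustar R ×ˢ S1 := ⟨hx, hdvS⟩
      have hq := isMinOn_iff.mp hqmin (x, dv) hmem
      have hvd : v = ‖v‖ • dv := by
        rw [hdvdef, smul_smul, mul_inv_cancel₀ hnv.ne', one_smul]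
      have happ : (⟪fderiv ℝ (gradient W) x v, v⟫ : ℝ)
          = ‖v‖ ^ 2 * ⟪fderiv ℝ (gradient W) x dv, dv⟫ := by
        conv_lhs => rw [hvd]
        rw [map_smul, real_inner_smul_left, real_inner_smul_right]
        ring
      rw [happ]
      nlinarith [hq]
    -- energy decay
    set Efun : ℝ → ℝ := fun t => ⟪gradient W (u t) - Kstar, gradient W (u t) - Kstar⟫
      with hEdef
    have hE0 : ∀ t, 0 ≤ Efun t := fun t => real_inner_self_nonneg
    have hEnorm : ∀ t, Efun t = ‖gradient W (u t) - Kstar‖ ^ 2 := fun t =>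
      real_inner_self_eq_norm_sq _
    have hhd : ∀ t ∈ Set.Ici (0:ℝ), HasDerivAt (fun t => gradient W (u t) - Kstar)
        (-(fderiv ℝ (gradient W) (u t)) ((fderiv ℝ (gradient W) (u t))
          (gradient W (u t) - Kstar))) t := by
      intro t ht
      have h1 := ((hG.differentiable one_ne_zero (u t)).hasFDerivAt).comp_hasDerivAt t (hu t ht)
      rw [map_neg] at h1
      exact h1.sub_const Kstar
    have hEd : ∀ t ∈ Set.Ici (0:ℝ), HasDerivAt Efun
        (⟪gradient W (u t) - Kstar, -(fderiv ℝ (gradient W) (u t))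
            ((fderiv ℝ (gradient W) (u t)) (gradient W (u t) - Kstar))⟫
          + ⟪-(fderiv ℝ (gradient W) (u t)) ((fderiv ℝ (gradient W) (u t))
            (gradient W (u t) - Kstar)), gradient W (u t) - Kstar⟫) t := by
      intro t ht
      exact (hhd t ht).inner ℝ (hhd t ht)
    have hEbound : ∀ t ∈ Set.Ici (0:ℝ),
        (⟪gradient W (u t) - Kstar, -(fderiv ℝ (gradient W) (u t))
            ((fderiv ℝ (gradient W) (u t)) (gradient W (u t) - Kstar))⟫
          + ⟪-(fderiv ℝ (gradient W) (u t)) ((fderiv ℝ (gradient W) (u t))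
            (gradient W (u t) - Kstar)), gradient W (u t) - Kstar⟫ : ℝ)
          ≤ -(2 * lam ^ 2) * Efun t := by
      intro t ht
      set h : EuclideanSpace ℝ (Fin n) := gradient W (u t) - Kstar with hhdef
      set Hh : EuclideanSpace ℝ (Fin n) :=
        (fderiv ℝ (gradient W) (u t)) h with hHhdef
      rw [inner_neg_right, inner_neg_left]
      have hsy : (⟪h, (fderiv ℝ (gradient W) (u t)) Hh⟫ : ℝ) = ⟪Hh, Hh⟫ := by
        rw [real_inner_comm, hess_symm' hW]
      have hsy2 : (⟪(fderiv ℝ (gradient W) (u t)) Hh, h⟫ : ℝ) = ⟪Hh, Hh⟫ := by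
        rw [hess_symm' hW]
      rw [hsy, hsy2]
      -- show 2 * lam^2 * Efun t ≤ 2 * ⟪Hh, Hh⟫
      have hmem : u t ∈ Metric.closedBall ustar R := by
        rw [Metric.mem_closedBall, dist_eq_norm]
        exact hRad t ht
      have hkey : lam * ‖h‖ ^ 2 ≤ ⟪Hh, h⟫ := by
        rw [hHhdef]
        exact hlam2 (u t) hmem h (horth (u t))
      have hCS : (⟪Hh, h⟫ : ℝ) ≤ ‖Hh‖ * ‖h‖ := real_inner_le_norm Hh h
      have hHh2 : (⟪Hh, Hh⟫ : ℝ) = ‖Hh‖ ^ 2 := real_inner_self_eq_norm_sq Hh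
      have hEt : Efun t = ‖h‖ ^ 2 := hEnorm t
      rw [hHh2, hEt]
      -- lam * ‖h‖^2 ≤ ‖Hh‖ * ‖h‖ so lam * ‖h‖ ≤ ‖Hh‖ (or h = 0)
      rcases eq_or_ne h 0 with h0 | h0
      · rw [h0]; simp
      have hnh : (0:ℝ) < ‖h‖ := norm_pos_iff.mpr h0
      have hlamh : lam * ‖h‖ ≤ ‖Hh‖ := by
        have := le_trans hkey hCS
        nlinarith
      nlinarith [norm_nonneg Hh, norm_nonneg h]
    have hdecay := gronwall_decay hEd hEbound
    -- conclusion
    refine ⟨Real.sqrt (Efun 0) / lam + 1, by positivity, lam ^ 2, by positivity, ?_⟩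
    intro t ht
    have htI : t ∈ Set.Ici (0:ℝ) := ht
    rcases eq_or_ne (u t - ustar) 0 with hz | hz
    · rw [hz, norm_zero]; positivity
    have hnv : (0:ℝ) < ‖u t - ustar‖ := norm_pos_iff.mpr hz
    -- quantitative monotonicity along the segment
    have hseg : ∀ s ∈ Set.Icc (0:ℝ) 1, lam * ‖u t - ustar‖ ^ 2
        ≤ ⟪fderiv ℝ (gradient W) (ustar + s • (u t - ustar)) (u t - ustar), u t - ustar⟫ := by
      intro s hs
      apply hlam2 _ _ _ (hdifforth t htI)
      rw [Metric.mem_closedBall, dist_eq_norm, add_sub_cancel_left, norm_smul,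
        Real.norm_eq_abs, abs_of_nonneg hs.1]
      calc s * ‖u t - ustar‖ ≤ 1 * ‖u t - ustar‖ :=
            mul_le_mul_of_nonneg_right hs.2 (norm_nonneg _)
        _ = ‖u t - ustar‖ := one_mul _
        _ ≤ R := hRad t htI
    have hquant := grad_incr_ge hW ustar (u t - ustar) (lam * ‖u t - ustar‖ ^ 2) hseg
    rw [add_sub_cancel, hcrit] at hquant
    have hCS2 : (⟪gradient W (u t) - Kstar, u t - ustar⟫ : ℝ)
        ≤ ‖gradient W (u t) - Kstar‖ * ‖u t - ustar‖ := real_inner_le_norm _ _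
    -- norm of h decays
    have hEdec := hdecay t htI
    have hsqrt : ‖gradient W (u t) - Kstar‖
        ≤ Real.sqrt (Efun 0) * Real.exp (-(lam ^ 2) * t) := by
      have hb : (0:ℝ) ≤ Real.sqrt (Efun 0) * Real.exp (-(lam ^ 2) * t) := by positivity
      have hsq : ‖gradient W (u t) - Kstar‖ ^ 2
          ≤ (Real.sqrt (Efun 0) * Real.exp (-(lam ^ 2) * t)) ^ 2 := by
        rw [mul_pow, Real.sq_sqrt (hE0 0), ← Real.exp_nat_mul]
        have : Efun t ≤ Efun 0 * Real.exp (-(2 * lam ^ 2) * t) := hEdec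
        rw [hEnorm t] at this
        calc ‖gradient W (u t) - Kstar‖ ^ 2 ≤ Efun 0 * Real.exp (-(2 * lam ^ 2) * t) := this
          _ = Efun 0 * Real.exp ((2:ℕ) * (-(lam ^ 2) * t)) := by ring_nf
        -- fallthrough
      nlinarith [norm_nonneg (gradient W (u t) - Kstar), hb]
    -- combine
    have hdiv : lam * ‖u t - ustar‖ ≤ ‖gradient W (u t) - Kstar‖ := by
      nlinarith [hquant, hCS2]
    have : ‖u t - ustar‖ ≤ Real.sqrt (Efun 0) / lam * Real.exp (-(lam ^ 2) * t) := by
      rw [div_mul_eq_mul_div, le_div_iff₀ hlam]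
      calc ‖u t - ustar‖ * lam = lam * ‖u t - ustar‖ := by ring
        _ ≤ ‖gradient W (u t) - Kstar‖ := hdiv
        _ ≤ Real.sqrt (Efun 0) * Real.exp (-(lam ^ 2) * t) := hsqrt
    calc ‖u t - ustar‖ ≤ Real.sqrt (Efun 0) / lam * Real.exp (-(lam ^ 2) * t) := this
      _ ≤ (Real.sqrt (Efun 0) / lam + 1) * Real.exp (-(lam ^ 2) * t) := by
          have := Real.exp_pos (-(lam ^ 2) * t)
          nlinarith
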